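/- arXiv:1003.5275 — 2 statements merged into one kernel-verified Lean document; each statement's English description precedes it below -/
import Mathlib

section
/- Let A be a central simple algebra over a field C and b₁, b₂ ∈ A linearly independent over C. Then there exists c ∈ A with b₁ c b₂ ≠ b₂ c b₁. -/
/-!
Suppose `b₁ c b₂ = b₂ c b₁` for every `c`. Writing `1 = ∑ xᵢ b₂ yᵢ`, which simplicity allows,
gives `b₁ c = ∑ b₁ c xᵢ b₂ yᵢ = ∑ b₂ c xᵢ b₁ yᵢ = b₂ c d` with `d = ∑ xᵢ b₁ yᵢ`. Then
`b₂ c (c' d - d c') = b₁ c c' - b₁ c c' = 0` for all `c, c'`, and simplicity forces `d` to be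
central, hence a scalar `r`; but then `b₁ = r b₂`.
-/

namespace IsSimpleRing

variable {R : Type*} [Ring R] [IsSimpleRing R]

theorem eq_zero_of_forall_mul_mul_eq_zero {b w : R} (hb : b ≠ 0)
    (h : ∀ c, b * c * w = 0) : w = 0 := by
  by_contra hw
  let I : TwoSidedIdeal R := .mk' {z | ∀ c, b * c * z = 0}
    (by simp) (fun hx hy c ↦ by simp [mul_add, hx c, hy c]) (fun hx c ↦ by simp [hx c])
    (fun {x _} hy c ↦ by rw [← mul_assoc, mul_assoc b, hy])
    (fun {_ y} hx c ↦ by rw [← mul_assoc, hx, zero_mul])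
  have h1 : (1 : R) ∈ I := one_mem_of_ne_zero_mem I hw ((TwoSidedIdeal.mem_mk' ..).2 h)
  exact hb (by simpa using (TwoSidedIdeal.mem_mk' ..).1 h1 1)

theorem exists_forall_mul_eq_mul_mul_of_forall_mul_mul_comm {b₁ b₂ : R} (hb₂ : b₂ ≠ 0)
    (h : ∀ c, b₁ * c * b₂ = b₂ * c * b₁) : ∃ d, ∀ c, b₁ * c = b₂ * c * d := by
  let I : TwoSidedIdeal R := .mk' {z | ∃ d, ∀ c, b₁ * c * z = b₂ * c * d}
    ⟨0, by simp⟩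
    (fun ⟨d, hd⟩ ⟨d', hd'⟩ ↦ ⟨d + d', fun c ↦ by simp [mul_add, hd c, hd' c]⟩)
    (fun ⟨d, hd⟩ ↦ ⟨-d, fun c ↦ by simp [hd c]⟩)
    (fun {x _} ⟨d, hd⟩ ↦ ⟨x * d, fun c ↦ by simpa only [mul_assoc] using hd (c * x)⟩)
    (fun {_ y} ⟨d, hd⟩ ↦ ⟨d * y, fun c ↦ by rw [← mul_assoc, hd c, mul_assoc]⟩)
  have h1 : (1 : R) ∈ I := one_mem_of_ne_zero_mem I hb₂ ((TwoSidedIdeal.mem_mk' ..).2 ⟨b₁, h⟩)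
  simpa using (TwoSidedIdeal.mem_mk' ..).1 h1

theorem mem_center_of_forall_mul_eq_mul_mul {b₁ b₂ d : R} (hb₂ : b₂ ≠ 0)
    (h : ∀ c, b₁ * c = b₂ * c * d) : d ∈ Set.center R := by
  refine Semigroup.mem_center_iff.2 fun c' ↦ sub_eq_zero.1 <|
    eq_zero_of_forall_mul_mul_eq_zero hb₂ fun c ↦ ?_
  rw [mul_sub, ← mul_assoc, ← mul_assoc, mul_assoc b₂ c c', ← h, ← h, mul_assoc, sub_self]

end IsSimpleRing

/-- In a central simple algebra, if `b₁, b₂` are linearly independent over the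
center `C`, then `b₁ c b₂ ≠ b₂ c b₁` for some `c`. -/
theorem exists_noncommuting_sandwich {C : Type*} [Field C] {A : Type*} [Ring A]
    [Algebra C A] [Algebra.IsCentral C A] [IsSimpleRing A] (b₁ b₂ : A)
    (h : LinearIndependent C ![b₁, b₂]) :
    ∃ c : A, b₁ * c * b₂ ≠ b₂ * c * b₁ := by
  by_contra! hcomm
  have hb₂ : b₂ ≠ 0 := by simpa using h.ne_zero 1
  obtain ⟨d, hd⟩ := IsSimpleRing.exists_forall_mul_eq_mul_mul_of_forall_mul_mul_comm hb₂ hcomm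
  have hd_center : d ∈ Subalgebra.center C A :=
    IsSimpleRing.mem_center_of_forall_mul_eq_mul_mul hb₂ hd
  obtain ⟨r, rfl⟩ := Algebra.mem_bot.1 (Algebra.IsCentral.out hd_center)
  refine (LinearIndependent.pair_iff' hb₂).1 (LinearIndependent.pair_symm_iff.1 h) r ?_
  simpa [Algebra.smul_def, Algebra.commutes] using (hd 1).symm
end

section
/- Let R be a prime PI-ring whose central closure R_C is a finite-dimensional central simple algebra over the extended centroid C, and suppose every nonzero ideal of R meets the center Z of R nontrivially. Then every element λ ∈ C can be written as λ = z⁻¹ z' with z, z' ∈ Z, z ≠ 0; that is, C is the field of fractions of Z. -/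
/-- Posner's theorem, part (c).  `Q` plays the role of the symmetric Martindale
ring of quotients of the prime ring `R`; the extended centroid `C` is the center
of `Q`, which is a field, and for every `λ ∈ C` there is a nonzero ideal `I` of
`R` with `λI ⊆ R`.  Assume the central closure of `R` (the subring generated by
`R` and `C`) is a simple ring, and that every nonzero two-sided ideal of `R`
meets the center `Z` of `R` nontrivially.  Then every `λ ∈ C` can be written as
`λ = z⁻¹ z'` with `z, z' ∈ Z`, `z ≠ 0` (i.e. `z * λ = z'`): `C` is the field of
fractions of `Z`. -/
theorem extended_centroid_is_fraction_field_of_center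
    {Q : Type*} [Ring Q] (R : Subring Q)
    (hfield : IsField ↥(Subring.center Q))
    (hprime : ∀ a b : ↥R, (∀ x : ↥R, a * x * b = 0) → a = 0 ∨ b = 0)
    (hZC : ∀ z : ↥R, z ∈ Subring.center ↥R → (z : Q) ∈ Subring.center Q)
    (hquot : ∀ lam ∈ Subring.center Q,
      ∃ I : TwoSidedIdeal ↥R, I ≠ ⊥ ∧ ∀ x ∈ I, lam * (x : Q) ∈ R)
    (hclosure : IsSimpleRing ↥(Subring.closure ((R : Set Q) ∪ (Subring.center Q : Set Q))))
    (hmeet : ∀ I : TwoSidedIdeal ↥R, I ≠ ⊥ →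
      ∃ z ∈ I, z ≠ 0 ∧ z ∈ Subring.center ↥R) :
    ∀ lam ∈ Subring.center Q, ∃ z z' : ↥R,
      z ∈ Subring.center ↥R ∧ z' ∈ Subring.center ↥R ∧ z ≠ 0 ∧
        (z : Q) * lam = (z' : Q) := by
  intro lam hlam
  obtain ⟨I, hI, hIR⟩ := hquot lam hlam
  obtain ⟨z, hzI, hz0, hzZ⟩ := hmeet I hI
  have hz' : lam * (z : Q) ∈ R := hIR z hzI
  refine ⟨z, ⟨lam * (z : Q), hz'⟩, hzZ, ?_, hz0, ?_⟩
  · rw [Subring.mem_center_iff]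
    intro g
    apply Subtype.ext
    push_cast
    have h1 : (g : Q) * lam = lam * g := (Subring.mem_center_iff.mp hlam) g
    have h2 : (g : Q) * z = z * g := by
      have := (Subring.mem_center_iff.mp hzZ) g
      exact_mod_cast congrArg (Subtype.val) this
    calc (g : Q) * (lam * z) = lam * (g * z) := by rw [← mul_assoc, h1, mul_assoc]
      _ = lam * z * g := by rw [h2, mul_assoc]
  · exact (Subring.mem_center_iff.mp hlam) (z : Q)
end
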